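/- In the chord graph G_n with d = ⌊n/2⌋, a vertex corresponding to a chord at cyclic distance i (2 ≤ i ≤ d, and if n is even assume i < d) has degree i(i−1) + 2(i−1)(d−i) when n = 2d+1 is odd. -/

import Mathlib

/-!
A pair `0 < a < i < b < n` is automatically a chord (`b - a ≥ 2` and `n - (b - a) ≥ 2`), so the
chords crossing `{0, i}` are exactly the pairs with one endpoint among the `i - 1` points strictly
inside the arc `(0, i)` and the other among the `n - 1 - i` points strictly after `i`.
For `n = 2d + 1` their number `(i - 1)(2d - i)` splits as `i(i - 1) + 2(i - 1)(d - i)`.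
-/

open Finset

theorem Nat.two_le_cyclicDist_of_lt_of_lt {n i a b : ℕ} (hb : b < n) (ha : 0 < a) (hai : a < i)
    (hib : i < b) : 2 ≤ min (b - a) (n - (b - a)) := by
  omega

theorem Fin.filter_crossing_eq_Ioo_product_Ioi (n i : ℕ) (hi : i < n + 1) :
    (univ : Finset (Fin (n + 1) × Fin (n + 1))).filter
      (fun p => p.1.val < p.2.val ∧ 2 ≤ min (p.2.val - p.1.val) ((n + 1) - (p.2.val - p.1.val)) ∧
        0 < p.1.val ∧ p.1.val < i ∧ i < p.2.val)
      = Ioo 0 ⟨i, hi⟩ ×ˢ Ioi ⟨i, hi⟩ := by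
  ext ⟨a, b⟩
  simp only [mem_filter, mem_univ, true_and, mem_product, mem_Ioo, mem_Ioi, Fin.lt_def,
    Fin.val_zero]
  constructor
  · rintro ⟨-, -, ha, hai, hib⟩
    exact ⟨⟨ha, hai⟩, hib⟩
  · rintro ⟨⟨ha, hai⟩, hib⟩
    exact ⟨by omega, Nat.two_le_cyclicDist_of_lt_of_lt b.isLt ha hai hib, ha, hai, hib⟩

theorem Fin.card_filter_crossing (n i : ℕ) (hi : i < n + 1) :
    ((univ : Finset (Fin (n + 1) × Fin (n + 1))).filter
      (fun p => p.1.val < p.2.val ∧ 2 ≤ min (p.2.val - p.1.val) ((n + 1) - (p.2.val - p.1.val)) ∧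
        0 < p.1.val ∧ p.1.val < i ∧ i < p.2.val)).card
      = (i - 1) * (n - i) := by
  rw [Fin.filter_crossing_eq_Ioo_product_Ioi n i hi, card_product, Fin.card_Ioo, Fin.card_Ioi]
  simp

theorem Nat.sub_one_mul_two_mul_sub_eq {d i : ℕ} (hid : i ≤ d) :
    (i - 1) * (2 * d - i) = i * (i - 1) + 2 * (i - 1) * (d - i) := by
  rw [show 2 * d - i = i + 2 * (d - i) by omega]
  ring

theorem stmt_2_general (d i : ℕ) (hid : i ≤ d) :
    ((Finset.univ : Finset (Fin (2 * d + 1) × Fin (2 * d + 1))).filter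
      (fun p =>
        -- p is a chord: endpoints ordered and at cyclic distance ≥ 2
        p.1.val < p.2.val ∧
        2 ≤ min (p.2.val - p.1.val) ((2 * d + 1) - (p.2.val - p.1.val)) ∧
        -- p crosses the fixed chord {0, i}
        0 < p.1.val ∧ p.1.val < i ∧ i < p.2.val)).card
      = i * (i - 1) + 2 * (i - 1) * (d - i) := by
  rw [Fin.card_filter_crossing (2 * d) i (by omega)]
  exact Nat.sub_one_mul_two_mul_sub_eq hid

/-- Degree formula in the chord graph `G_n` for odd `n = 2d+1`: the number of
chords of the `n`-cycle crossing a fixed chord of cyclic distance `i`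
(`2 ≤ i ≤ d`) equals `i(i−1) + 2(i−1)(d−i)`.  We take the fixed chord to be
`{0, i}`; a chord `{a,b}` with `a < b` crosses it iff exactly one endpoint lies
strictly between `0` and `i`, i.e. `0 < a < i < b`. -/
theorem stmt_2 (d i : ℕ) (hd : 1 ≤ d) (hi : 2 ≤ i) (hid : i ≤ d) :
    ((Finset.univ : Finset (Fin (2 * d + 1) × Fin (2 * d + 1))).filter
      (fun p =>
        -- p is a chord: endpoints ordered and at cyclic distance ≥ 2
        p.1.val < p.2.val ∧
        2 ≤ min (p.2.val - p.1.val) ((2 * d + 1) - (p.2.val - p.1.val)) ∧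
        -- p crosses the fixed chord {0, i}
        0 < p.1.val ∧ p.1.val < i ∧ i < p.2.val)).card
      = i * (i - 1) + 2 * (i - 1) * (d - i) :=
  stmt_2_general d i hid
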